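/- If there exists at least one agent i with π_{iθ} ≠ π*_i, then for every agent i, (1/t) log μ_{it} converges in probability to −(1/m) ∑_{i=1}^m D_KL(π*_i ‖ π_{iθ}), where D_KL(p‖q) = ∑_{k=1}^K p_k log(p_k/q_k) is the Kullback–Leibler divergence. -/

import Mathlib

/-!
Taking logarithms turns the log-linear rule into the linear recursion
`L (t + 1) = g t + A *ᵥ L t` for the log-beliefs, driven by the log-likelihood innovations
`g t i = log ℓ_i(t + 1, ω_{i,t+1})`. Because `A` is doubly stochastic, the network average of
`L t` is exactly the sum of the averaged innovations; because `A` is primitive, the powers of `A`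
contract oscillations geometrically, so every agent stays within `O(log t)` of that average.

The innovations of one agent telescope to
`log (∏ₖ θₖ ^ nₖ * (t + K - 1)! / ((K - 1)! * ∏ₖ nₖ!))`. By Stirling's formula this is
`t * (∑ₖ (nₖ/t) log θₖ - ∑ₖ (nₖ/t) log (nₖ/t)) + O(log t)`, and by the strong law of large numbers
`nₖ/t → π*ₖ` almost surely, so its growth rate is `-D_KL(π* ‖ θ)`. Almost sure convergence then
gives convergence in probability.
-/

open MeasureTheory ProbabilityTheory Filter Finset

/-- The paper's signal at time `τ ≥ 1` is `X (τ - 1)`: `X` is indexed from `0`. -/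
def sigCount {Ω : Type*} {K : ℕ} (X : ℕ → Ω → Fin K) (k : Fin K) (t : ℕ) (x : Ω) : ℕ :=
  ((Finset.range t).filter (fun τ => X τ x = k)).card

noncomputable def KLdiv {K : ℕ} (p q : Fin K → ℝ) : ℝ :=
  ∑ k, p k * Real.log (p k / q k)

open Real Matrix
open scoped Nat Topology

theorem tendsto_log_add_div (c : ℝ) :
    Tendsto (fun t : ℕ => log (c + t) / t) atTop (𝓝 0) := by
  have hlin : (fun x : ℝ => c + x) =O[atTop] id :=
    (Asymptotics.isLittleO_const_id_atTop c).isBigO.add (Asymptotics.isBigO_refl _ _)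
  have := ((Real.isLittleO_log_id_atTop.comp_tendsto
    (tendsto_atTop_add_const_left _ c tendsto_id)).trans_isBigO hlin).tendsto_div_nhds_zero
  exact this.comp tendsto_natCast_atTop_atTop

theorem abs_log_factorial_sub_le (n : ℕ) : |log n ! - (n * log n - n)| ≤ 1 + log n := by
  rcases Nat.eq_zero_or_pos n with rfl | hn
  · simp
  have hn' : (1 : ℝ) ≤ n := by exact_mod_cast hn
  have hformula := Stirling.log_stirlingSeq_formula n
  have hlow : log √π ≤ log (Stirling.stirlingSeq n) :=
    log_le_log (by positivity) (Stirling.sqrt_pi_le_stirlingSeq hn.ne')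
  have hup : log (Stirling.stirlingSeq n) ≤ log (Stirling.stirlingSeq 1) := by
    obtain ⟨k, rfl⟩ := Nat.exists_eq_add_of_le' hn
    exact log_le_log (by positivity [Stirling.stirlingSeq'_pos k])
      (Stirling.stirlingSeq'_antitone (Nat.zero_le k))
  rw [Stirling.stirlingSeq_one, log_div (exp_pos 1).ne' (by positivity), log_exp] at hup
  rw [log_mul (by norm_num) (by positivity), log_div (by positivity) (exp_pos 1).ne',
    log_exp] at hformula
  have hsqrt2 : log √2 = log 2 / 2 := log_sqrt (by norm_num)
  have hsqrtπ : 0 ≤ log √π := log_nonneg (Real.one_le_sqrt.2 (by linarith [Real.pi_gt_three]))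
  have hlog2 : 0 ≤ log 2 := log_nonneg (by norm_num)
  have hlogn : 0 ≤ log n := log_nonneg hn'
  rw [abs_le]
  constructor <;> linarith

theorem abs_add_mul_log_add_sub_le {c t : ℝ} (hc : 0 ≤ c) (ht : 1 ≤ t) :
    |(c + t) * log (c + t) - t * log t - c| ≤ c * (1 + log (c + t)) := by
  have ht0 : 0 < t := by linarith
  have hlog : 0 ≤ log (c + t) := log_nonneg (by linarith)
  have hratio_nonneg : 0 ≤ log ((c + t) / t) := log_nonneg ((one_le_div ht0).2 (by linarith))
  have hratio_le : t * log ((c + t) / t) ≤ c :=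
    calc t * log ((c + t) / t) ≤ t * ((c + t) / t - 1) := by
          gcongr; exact log_le_sub_one_of_pos (by positivity)
      _ = c := by field_simp; ring
  rw [log_div (by positivity) ht0.ne'] at hratio_nonneg hratio_le
  rw [abs_le]
  constructor <;> nlinarith

theorem abs_log_multinomial_add_le {ι : Type*} [Fintype ι] (c : ℕ) {t : ℕ} (ht : t ≠ 0)
    {n : ι → ℕ} (hn : ∑ k, n k = t) :
    |log (c + t)! - ∑ k, log (n k)! + ∑ k, n k * log (n k / t)|
      ≤ (c + 1 + Fintype.card ι) * (1 + log (c + t)) := by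
  set R : ℕ → ℝ := fun n => log n ! - (n * log n - n)
  have ht1 : (1 : ℝ) ≤ t := by exact_mod_cast Nat.one_le_iff_ne_zero.2 ht
  have hsum : ∑ k, (n k : ℝ) = t := by exact_mod_cast hn
  have hn_log : ∀ k, (n k : ℝ) * log (n k / t) = n k * log (n k) - n k * log t := by
    intro k
    rcases eq_or_ne (n k) 0 with h | h
    · simp [h]
    · rw [log_div (by positivity) (by positivity)]; ring
  have hlog_n : ∀ k, log (n k) ≤ log ((c : ℝ) + t) := by
    intro k
    rcases eq_or_ne (n k) 0 with h | h
    · simpa [h] using log_nonneg (by linarith [c.cast_nonneg (α := ℝ)])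
    · refine log_le_log (by positivity) ?_
      have : n k ≤ t := hn ▸ single_le_sum (fun k _ => Nat.zero_le (n k)) (mem_univ k)
      exact_mod_cast this.trans (Nat.le_add_left t c)
  have hsplit : log (c + t)! - ∑ k, log (n k)! + ∑ k, n k * log (n k / t)
      = ((c + t) * log ((c : ℝ) + t) - t * log t - c) + R (c + t) - ∑ k, R (n k) := by
    simp only [R, hn_log, sum_sub_distrib, ← sum_mul, hsum]
    push_cast
    ring
  rw [hsplit]
  calc _ ≤ |(c + t) * log ((c : ℝ) + t) - t * log t - c| + |R (c + t)| + ∑ k, |R (n k)| :=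
        (abs_sub _ _).trans (add_le_add (abs_add_le _ _) (abs_sum_le_sum_abs _ _))
    _ ≤ c * (1 + log ((c : ℝ) + t)) + (1 + log ((c : ℝ) + t))
        + ∑ _k : ι, (1 + log ((c : ℝ) + t)) := by
        gcongr with k
        · exact abs_add_mul_log_add_sub_le c.cast_nonneg ht1
        · exact (abs_log_factorial_sub_le (c + t)).trans_eq (by push_cast; rfl)
        · exact (abs_log_factorial_sub_le (n k)).trans (by linarith [hlog_n k])
    _ = (c + 1 + Fintype.card ι) * (1 + log (c + t)) := by
        rw [sum_const, card_univ, nsmul_eq_mul]; ring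

theorem tendsto_log_multinomial_div {ι : Type*} [Fintype ι] (c : ℕ) {n : ι → ℕ → ℕ}
    (hn : ∀ t, ∑ k, n k t = t) {p : ι → ℝ}
    (hp : ∀ k, Tendsto (fun t => (n k t : ℝ) / t) atTop (𝓝 (p k))) :
    Tendsto (fun t => (log (c + t)! - ∑ k, log (n k t)!) / t) atTop
      (𝓝 (-∑ k, p k * log (p k))) := by
  have hentropy : Tendsto (fun t => ∑ k, (n k t : ℝ) / t * log ((n k t : ℝ) / t)) atTop
      (𝓝 (∑ k, p k * log (p k))) :=
    tendsto_finsetSum _ fun k _ => (continuous_mul_log.tendsto _).comp (hp k)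
  have hbound : Tendsto (fun t : ℕ => (c + 1 + Fintype.card ι) * (1 + log (c + t)) / t) atTop
      (𝓝 0) := by
    simpa [mul_div_assoc, add_div] using
      ((tendsto_const_div_atTop_nhds_zero_nat 1).add (tendsto_log_add_div c)).const_mul
        ((c : ℝ) + 1 + Fintype.card ι)
  have herror : Tendsto (fun t => (log (c + t)! - ∑ k, log (n k t)!
      + ∑ k, n k t * log (n k t / t)) / t) atTop (𝓝 0) := by
    refine squeeze_zero_norm' ?_ hbound
    filter_upwards [eventually_ne_atTop 0] with t ht
    rw [norm_div, Real.norm_natCast]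
    exact div_le_div_of_nonneg_right (abs_log_multinomial_add_le c ht (hn t)) (Nat.cast_nonneg t)
  rw [← zero_sub]
  refine (herror.sub hentropy).congr fun t => ?_
  simp only [add_div, sum_div, mul_div_right_comm]
  ring

section Consensus

variable {ι : Type*} [Fintype ι]

theorem abs_sub_average_le {w : ι → ℝ} {D : ℝ} (hw : ∀ i j, w i - w j ≤ D) (i : ι) :
    |w i - (∑ j, w j) / Fintype.card ι| ≤ D := by
  have hcard : (0 : ℝ) < Fintype.card ι := by exact_mod_cast Fintype.card_pos_iff.2 ⟨i⟩
  have hsplit : w i - (∑ j, w j) / Fintype.card ι = (∑ j, (w i - w j)) / Fintype.card ι := by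
    rw [sum_sub_distrib, sum_const, card_univ, nsmul_eq_mul]
    field_simp
  rw [hsplit, abs_div, abs_of_pos hcard, div_le_iff₀ hcard]
  calc |∑ j, (w i - w j)| ≤ ∑ j, |w i - w j| := abs_sum_le_sum_abs _ _
    _ ≤ ∑ _j : ι, D := sum_le_sum fun j _ => abs_sub_le_iff.2 ⟨hw i j, hw j i⟩
    _ = D * Fintype.card ι := by simp [mul_comm]

theorem mulVec_sub_mulVec_le {M : Matrix ι ι ℝ} (hM : ∀ i, ∑ j, M i j = 1) {δ : ℝ}
    (hδ : ∀ i j, δ ≤ M i j) {v : ι → ℝ} {D : ℝ} (hv : ∀ i j, v i - v j ≤ D) (i j : ι) :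
    (M *ᵥ v) i - (M *ᵥ v) j ≤ (1 - Fintype.card ι * δ) * D := by
  obtain ⟨l, -, hl⟩ := exists_min_image univ v ⟨i, mem_univ i⟩
  -- the common part `c` of rows `i` and `j` cancels; what is left has mass `1 - ∑ c`
  set c : ι → ℝ := fun k => min (M i k) (M j k)
  have hc : Fintype.card ι * δ ≤ ∑ k, c k := by
    simpa using sum_le_sum fun k (_ : k ∈ univ) => le_min (hδ i k) (hδ j k)
  have hD : 0 ≤ D := by simpa using hv i i
  calc (M *ᵥ v) i - (M *ᵥ v) j = ∑ k, (M i k - c k) * v k - ∑ k, (M j k - c k) * v k := by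
        simp only [mulVec, dotProduct, sub_mul, sum_sub_distrib]; ring
    _ ≤ ∑ k, (M i k - c k) * (v l + D) - ∑ k, (M j k - c k) * v l := by
        gcongr with k _ k _
        · exact sub_nonneg.2 (min_le_left _ _)
        · linarith [hv k l]
        · exact sub_nonneg.2 (min_le_right _ _)
        · exact hl k (mem_univ k)
    _ = (1 - ∑ k, c k) * D := by simp only [← sum_mul, sum_sub_distrib, hM]; ring
    _ ≤ (1 - Fintype.card ι * δ) * D := by gcongr

theorem pow_mulVec_sub_le [DecidableEq ι] {M : Matrix ι ι ℝ} (hM : ∀ i, ∑ j, M i j = 1)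
    {δ : ℝ} (hδ : ∀ i j, δ ≤ M i j) {v : ι → ℝ} {D : ℝ} (hv : ∀ i j, v i - v j ≤ D) (q : ℕ)
    (i j : ι) :
    (M ^ q *ᵥ v) i - (M ^ q *ᵥ v) j ≤ (1 - Fintype.card ι * δ) ^ q * D := by
  induction q generalizing i j with
  | zero => simpa using hv i j
  | succ q ih =>
    rw [pow_succ' M, ← mulVec_mulVec, pow_succ', mul_assoc]
    exact mulVec_sub_mulVec_le hM hδ ih i j

theorem pow_mulVec_sub_le_of_le_pow [DecidableEq ι] {A : Matrix ι ι ℝ}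
    (hA : A ∈ rowStochastic ℝ ι) {N : ℕ} {δ : ℝ} (hδ : ∀ i j, δ ≤ (A ^ N) i j) {v : ι → ℝ}
    {D : ℝ} (hv : ∀ i j, v i - v j ≤ D) (n : ℕ) (i j : ι) :
    (A ^ n *ᵥ v) i - (A ^ n *ᵥ v) j ≤ (1 - Fintype.card ι * δ) ^ (n / N) * D := by
  have hrow : ∀ r, ∀ i, ∑ j, (A ^ r) i j = 1 := fun r =>
    sum_row_of_mem_rowStochastic (pow_mem hA r)
  have hsplit : A ^ n = (A ^ N) ^ (n / N) * A ^ (n % N) := by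
    rw [← pow_mul, ← pow_add, Nat.div_add_mod]
  rw [hsplit, ← mulVec_mulVec]
  refine pow_mulVec_sub_le (hrow N) hδ (fun i j => ?_) (n / N) i j
  simpa using mulVec_sub_mulVec_le (hrow (n % N)) (δ := 0)
    (fun _ _ => nonneg_of_mem_rowStochastic (pow_mem hA _)) hv i j

theorem sum_range_pow_div_le {γ : ℝ} (hγ0 : 0 ≤ γ) (hγ1 : γ < 1) {N : ℕ} (hN : 0 < N) (t : ℕ) :
    ∑ u ∈ range t, γ ^ (u / N) ≤ N / (1 - γ) := by
  have hblock : ∀ q, ∑ u ∈ range (N * q), γ ^ (u / N) = N * ∑ i ∈ range q, γ ^ i := by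
    intro q
    induction q with
    | zero => simp
    | succ q ih =>
      have hq : ∀ r ∈ range N, γ ^ ((N * q + r) / N) = γ ^ q := fun r hr => by
        rw [Nat.mul_add_div hN, Nat.div_eq_of_lt (mem_range.1 hr), add_zero]
      rw [Nat.mul_succ, sum_range_add, ih, sum_congr rfl hq, sum_range_succ]
      simp only [sum_const, card_range, nsmul_eq_mul]
      ring
  calc ∑ u ∈ range t, γ ^ (u / N) ≤ ∑ u ∈ range (N * t), γ ^ (u / N) :=
        sum_le_sum_of_subset_of_nonneg (range_mono (Nat.le_mul_of_pos_left t hN))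
          fun _ _ _ => pow_nonneg hγ0 _
    _ = N * ∑ i ∈ Ico 0 t, γ ^ i := by rw [hblock, range_eq_Ico]
    _ ≤ N * (γ ^ 0 / (1 - γ)) := by gcongr; exact geom_sum_Ico_le_of_lt_one hγ0 hγ1
    _ = N / (1 - γ) := by ring

theorem linearRecursion_eq_sum [DecidableEq ι] {A : Matrix ι ι ℝ} {L g : ℕ → ι → ℝ}
    (hL0 : L 0 = 0) (hL : ∀ t, L (t + 1) = g t + A *ᵥ L t) (t : ℕ) :
    L t = ∑ s ∈ range t, A ^ (t - 1 - s) *ᵥ g s := by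
  induction t with
  | zero => simp [hL0]
  | succ t ih =>
    rw [hL, ih, mulVec_sum, sum_range_succ, Nat.add_sub_cancel, Nat.sub_self, pow_zero,
      one_mulVec, add_comm]
    congr 1
    refine sum_congr rfl fun s hs => ?_
    rw [mulVec_mulVec, ← pow_succ']
    congr 2
    have := mem_range.1 hs
    omega

theorem sum_linearRecursion [DecidableEq ι] {A : Matrix ι ι ℝ} (hA : A ∈ colStochastic ℝ ι)
    {L g : ℕ → ι → ℝ} (hL0 : L 0 = 0) (hL : ∀ t, L (t + 1) = g t + A *ᵥ L t) (t : ℕ) :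
    ∑ j, L t j = ∑ s ∈ range t, ∑ j, g s j := by
  induction t with
  | zero => simp [hL0]
  | succ t ih =>
    simp only [hL, Pi.add_apply, sum_add_distrib, sum_mulVec_of_mem_colStochastic hA, ih,
      sum_range_succ, add_comm]

theorem abs_sub_average_linearRecursion_le [DecidableEq ι] {A : Matrix ι ι ℝ}
    (hA : A ∈ doublyStochastic ℝ ι) {N : ℕ} {δ : ℝ} (hδ : ∀ i j, δ ≤ (A ^ N) i j)
    {L g : ℕ → ι → ℝ} (hL0 : L 0 = 0)
    (hL : ∀ t, L (t + 1) = g t + A *ᵥ L t) {B : ℕ → ℝ} (hB : ∀ s i j, g s i - g s j ≤ B s)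
    (t : ℕ) (i : ι) :
    |L t i - (∑ j, L t j) / Fintype.card ι|
      ≤ ∑ s ∈ range t, (1 - Fintype.card ι * δ) ^ ((t - 1 - s) / N) * B s := by
  rw [mem_doublyStochastic_iff_mem_rowStochastic_and_mem_colStochastic] at hA
  rw [sum_linearRecursion hA.2 hL0 hL, linearRecursion_eq_sum hL0 hL, Finset.sum_apply, sum_div,
    ← sum_sub_distrib]
  refine (abs_sum_le_sum_abs _ _).trans (sum_le_sum fun s _ => ?_)
  rw [← sum_mulVec_of_mem_colStochastic (pow_mem hA.2 _)]
  exact abs_sub_average_le (pow_mulVec_sub_le_of_le_pow hA.1 hδ (hB s) _) i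

theorem abs_sub_average_linearRecursion_le_of_primitive [DecidableEq ι] {A : Matrix ι ι ℝ}
    (hA : A ∈ doublyStochastic ℝ ι) (hprim : ∃ N, 0 < N ∧ ∀ i j, 0 < (A ^ N) i j)
    {L g : ℕ → ι → ℝ} (hL0 : L 0 = 0) (hL : ∀ t, L (t + 1) = g t + A *ᵥ L t) {b : ℕ → ℝ}
    (hb : Monotone b) (hgb : ∀ t i, |g t i| ≤ b t) (i : ι) :
    ∃ C, ∀ t, |L t i - (∑ j, L t j) / Fintype.card ι| ≤ C * b t := by
  obtain ⟨N, hN, hpos⟩ := hprim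
  obtain ⟨δ, hδ, hδle⟩ : ∃ δ, 0 < δ ∧ ∀ i j, δ ≤ (A ^ N) i j := by
    obtain ⟨p, -, hp⟩ := exists_min_image univ (fun p : ι × ι => (A ^ N) p.1 p.2)
      ⟨(i, i), mem_univ _⟩
    exact ⟨_, hpos p.1 p.2, fun i j => hp (i, j) (mem_univ _)⟩
  set γ := 1 - Fintype.card ι * δ
  have hγ1 : γ < 1 := by
    have : (0 : ℝ) < Fintype.card ι := by exact_mod_cast Fintype.card_pos_iff.2 ⟨i⟩
    simp only [γ, sub_lt_self_iff]
    positivity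
  have hγ0 : 0 ≤ γ := by
    have := sum_le_sum fun j (_ : j ∈ univ) => hδle i j
    rw [sum_row_of_mem_doublyStochastic (pow_mem hA N), sum_const, card_univ,
      nsmul_eq_mul] at this
    simp only [γ]; linarith
  refine ⟨N / (1 - γ) * 2, fun t => ?_⟩
  have hbt : 0 ≤ b t := (abs_nonneg _).trans (hgb t i)
  calc _ ≤ ∑ s ∈ range t, γ ^ ((t - 1 - s) / N) * (2 * b s) :=
        abs_sub_average_linearRecursion_le hA hδle hL0 hL (fun s i j => by
          linarith [abs_le.1 (hgb s i), abs_le.1 (hgb s j)]) t i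
    _ ≤ ∑ s ∈ range t, γ ^ ((t - 1 - s) / N) * (2 * b t) := by
        gcongr with s hs
        exact hb (mem_range.1 hs).le
    _ = (∑ u ∈ range t, γ ^ (u / N)) * (2 * b t) := by
        rw [← sum_mul, sum_range_reflect (fun u => γ ^ (u / N)) t]
    _ ≤ N / (1 - γ) * (2 * b t) := by gcongr; exact sum_range_pow_div_le hγ0 hγ1 hN t
    _ = N / (1 - γ) * 2 * b t := by ring

theorem tendsto_linearRecursion_div [DecidableEq ι] {A : Matrix ι ι ℝ}
    (hA : A ∈ doublyStochastic ℝ ι) (hprim : ∃ N, 0 < N ∧ ∀ i j, 0 < (A ^ N) i j)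
    {L g : ℕ → ι → ℝ} (hL0 : L 0 = 0) (hL : ∀ t, L (t + 1) = g t + A *ᵥ L t) {b : ℕ → ℝ}
    (hb : Monotone b) (hgb : ∀ t i, |g t i| ≤ b t)
    (hb_lim : Tendsto (fun t => b t / t) atTop (𝓝 0)) {ℓ : ι → ℝ}
    (hℓ : ∀ j, Tendsto (fun t => (∑ s ∈ range t, g s j) / t) atTop (𝓝 (ℓ j))) (i : ι) :
    Tendsto (fun t => L t i / t) atTop (𝓝 ((∑ j, ℓ j) / Fintype.card ι)) := by
  obtain ⟨C, hC⟩ := abs_sub_average_linearRecursion_le_of_primitive hA hprim hL0 hL hb hgb i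
  have hdev_lim : Tendsto (fun t => (L t i - (∑ j, L t j) / Fintype.card ι) / t) atTop
      (𝓝 0) := by
    have hbound := hb_lim.const_mul C
    rw [mul_zero] at hbound
    refine squeeze_zero_norm (fun t => ?_) hbound
    rw [norm_div, Real.norm_natCast, ← mul_div_assoc]
    exact div_le_div_of_nonneg_right (hC t) (Nat.cast_nonneg t)
  have havg_lim : Tendsto (fun t => (∑ j, L t j) / Fintype.card ι / t) atTop
      (𝓝 ((∑ j, ℓ j) / Fintype.card ι)) := by
    have hcol := (mem_doublyStochastic_iff_mem_rowStochastic_and_mem_colStochastic.1 hA).2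
    refine ((tendsto_finsetSum _ fun j _ => hℓ j).div_const _).congr fun t => ?_
    rw [sum_linearRecursion hcol hL0 hL, sum_comm, ← sum_div, div_right_comm]
  have := hdev_lim.add havg_lim
  rw [zero_add] at this
  exact this.congr fun t => by ring

section LogLinear

variable {A : Matrix ι ι ℝ} {a μ : ℕ → ι → ℝ}

theorem loglinear_pos (ha : ∀ t i, 0 < a t i) (hμ0 : ∀ i, μ 0 i = 1)
    (hμ : ∀ t i, μ (t + 1) i = a t i * ∏ j, μ t j ^ A i j) (t : ℕ) (i : ι) : 0 < μ t i := by
  induction t generalizing i with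
  | zero => simp [hμ0]
  | succ t ih =>
    rw [hμ]
    exact mul_pos (ha t i) (prod_pos fun j _ => rpow_pos_of_pos (ih j) _)

theorem log_loglinear_succ (ha : ∀ t i, 0 < a t i) (hμ0 : ∀ i, μ 0 i = 1)
    (hμ : ∀ t i, μ (t + 1) i = a t i * ∏ j, μ t j ^ A i j) (t : ℕ) :
    (fun i => log (μ (t + 1) i)) = (fun i => log (a t i)) + A *ᵥ fun i => log (μ t i) := by
  have hpos := loglinear_pos ha hμ0 hμ t
  ext i
  rw [hμ, log_mul (ha t i).ne' (prod_pos fun j _ => rpow_pos_of_pos (hpos j) _).ne',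
    log_prod fun j _ => (rpow_pos_of_pos (hpos j) _).ne']
  simp [mulVec, dotProduct, log_rpow (hpos _)]

theorem tendsto_log_loglinear_div [DecidableEq ι] (hA : A ∈ doublyStochastic ℝ ι)
    (hprim : ∃ N, 0 < N ∧ ∀ i j, 0 < (A ^ N) i j) (ha : ∀ t i, 0 < a t i)
    (hμ0 : ∀ i, μ 0 i = 1) (hμ : ∀ t i, μ (t + 1) i = a t i * ∏ j, μ t j ^ A i j)
    {b : ℕ → ℝ} (hb : Monotone b) (hab : ∀ t i, |log (a t i)| ≤ b t)
    (hb_lim : Tendsto (fun t => b t / t) atTop (𝓝 0)) {ℓ : ι → ℝ}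
    (hℓ : ∀ j, Tendsto (fun t => (∑ s ∈ range t, log (a s j)) / t) atTop (𝓝 (ℓ j)))
    (i : ι) :
    Tendsto (fun t => log (μ t i) / t) atTop (𝓝 ((∑ j, ℓ j) / Fintype.card ι)) :=
  tendsto_linearRecursion_div hA hprim (L := fun t i => log (μ t i)) (by ext; simp [hμ0])
    (log_loglinear_succ ha hμ0 hμ) hb hab hb_lim hℓ i

theorem measurable_loglinear {Ω : Type*} [MeasurableSpace Ω] {a μ : ℕ → ι → Ω → ℝ}
    (ha : ∀ t i, Measurable (a t i)) (hμ0 : ∀ i x, μ 0 i x = 1)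
    (hμ : ∀ t i x, μ (t + 1) i x = a t i x * ∏ j, μ t j x ^ A i j) (t : ℕ) (i : ι) :
    Measurable (μ t i) := by
  induction t generalizing i with
  | zero => simp [funext (hμ0 i)]
  | succ t ih =>
    rw [funext (hμ t i)]
    exact (ha t i).mul (Finset.measurable_prod _ fun j _ => (ih j).pow_const _)

end LogLinear

end Consensus

section Signals

variable {Ω : Type*} {K : ℕ}

theorem sigCount_succ (X : ℕ → Ω → Fin K) (k : Fin K) (t : ℕ) (x : Ω) :
    sigCount X k (t + 1) x = sigCount X k t x + if X t x = k then 1 else 0 := by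
  simp only [sigCount, range_add_one, filter_insert]
  split_ifs with h
  · rw [card_insert_of_notMem (by simp)]
  · rfl

theorem sum_range_comp_eq_sum_sigCount_smul {M : Type*} [AddCommMonoid M] (X : ℕ → Ω → Fin K)
    (f : Fin K → M) (t : ℕ) (x : Ω) :
    ∑ s ∈ range t, f (X s x) = ∑ k, sigCount X k t x • f k := by
  rw [← sum_fiberwise (range t) (fun s => X s x)]
  refine sum_congr rfl fun k _ => ?_
  rw [sum_congr rfl fun s hs => by rw [(mem_filter.1 hs).2], sum_const]
  rfl

theorem sum_sigCount (X : ℕ → Ω → Fin K) (t : ℕ) (x : Ω) : ∑ k, sigCount X k t x = t := by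
  simpa using (sum_range_comp_eq_sum_sigCount_smul X (fun _ => (1 : ℕ)) t x).symm

theorem prod_range_sigCount_succ (X : ℕ → Ω → Fin K) (t : ℕ) (x : Ω) :
    ∏ s ∈ range t, (sigCount X (X s x) s x + 1) = ∏ k, (sigCount X k t x)! := by
  induction t with
  | zero => simp [sigCount]
  | succ t ih =>
    have hstep : ∀ k, (sigCount X k (t + 1) x)!
        = (sigCount X k t x)! * if X t x = k then sigCount X k t x + 1 else 1 := by
      intro k
      rw [sigCount_succ]
      split_ifs <;> simp [Nat.factorial_succ, mul_comm]
    rw [prod_range_succ, ih, prod_congr rfl fun k _ => hstep k, prod_mul_distrib,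
      prod_ite_eq]
    simp

theorem sigCount_le (X : ℕ → Ω → Fin K) (k : Fin K) (t : ℕ) (x : Ω) : sigCount X k t x ≤ t :=
  (card_filter_le _ _).trans_eq (card_range t)

theorem neg_KLdiv_eq {p q : Fin K → ℝ} (hq : ∀ k, 0 < q k) :
    -KLdiv p q = ∑ k, p k * log (q k) - ∑ k, p k * log (p k) := by
  rw [KLdiv, ← sum_sub_distrib, ← sum_neg_distrib]
  refine sum_congr rfl fun k _ => ?_
  rcases eq_or_ne (p k) 0 with h | h
  · simp [h]
  · rw [log_div h (hq k).ne']; ring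

/-- The paper's `ℓ_i(t + 1, ω_{i,t+1})`, in the zero-based indexing of `sigCount`. -/
noncomputable def certainLikelihood (θ : Fin K → ℝ) (X : ℕ → Ω → Fin K) (t : ℕ) (x : Ω) : ℝ :=
  θ (X t x) * ((t + 1 + K - 1 : ℕ) : ℝ) / ((sigCount X (X t x) t x + 1 : ℕ) : ℝ)

variable {θ : Fin K → ℝ} {X : ℕ → Ω → Fin K}

theorem log_certainLikelihood (hθ : ∀ k, 0 < θ k) (t : ℕ) (x : Ω) :
    log (certainLikelihood θ X t x)
      = log (θ (X t x)) + log ((K + t : ℕ) : ℝ) - log ((sigCount X (X t x) t x + 1 : ℕ) : ℝ) := by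
  have hK := (X t x).pos
  rw [certainLikelihood, show t + 1 + K - 1 = K + t by omega,
    log_div (by have := hθ (X t x); positivity) (by positivity), log_mul (hθ _).ne' (by positivity)]

theorem certainLikelihood_pos (hθ : ∀ k, 0 < θ k) (t : ℕ) (x : Ω) :
    0 < certainLikelihood θ X t x := by
  have hK := (X t x).pos
  have := hθ (X t x)
  unfold certainLikelihood
  have : 0 < t + 1 + K - 1 := by omega
  positivity

theorem abs_log_certainLikelihood_le (hθ : ∀ k, 0 < θ k) {C : ℝ} (hC : ∀ k, |log (θ k)| ≤ C)
    (t : ℕ) (x : Ω) : |log (certainLikelihood θ X t x)| ≤ C + log (K + t) := by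
  have hK := (X t x).pos
  have hcount : (sigCount X (X t x) t x + 1 : ℝ) ≤ K + t := by
    have : (1 : ℝ) ≤ K := by exact_mod_cast hK
    have : (sigCount X (X t x) t x : ℝ) ≤ t := by exact_mod_cast sigCount_le X (X t x) t x
    linarith
  have hlog_le : log (sigCount X (X t x) t x + 1 : ℝ) ≤ log (K + t) :=
    log_le_log (by positivity) hcount
  have hlog_nonneg : 0 ≤ log (sigCount X (X t x) t x + 1 : ℝ) := log_nonneg (by simp)
  rw [log_certainLikelihood hθ]
  push_cast
  have := abs_le.1 (hC (X t x))
  rw [abs_le]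
  constructor <;> linarith

theorem sum_range_log_certainLikelihood (hθ : ∀ k, 0 < θ k) (t : ℕ) (x : Ω) :
    ∑ s ∈ range t, log (certainLikelihood θ X s x)
      = ∑ k, sigCount X k t x * log (θ k) + log (K.ascFactorial t : ℝ)
        - ∑ k, log (sigCount X k t x)! := by
  have hasc : ∑ s ∈ range t, log ((K + s : ℕ) : ℝ) = log (K.ascFactorial t : ℝ) := by
    rw [← log_prod fun s _ => Nat.cast_ne_zero.2 (by have := (X s x).pos; omega),
      ← Nat.cast_prod, Nat.ascFactorial_eq_prod_range]
  have hfac : ∑ s ∈ range t, log ((sigCount X (X s x) s x + 1 : ℕ) : ℝ)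
      = ∑ k, log (sigCount X k t x)! := by
    rw [← log_prod fun s _ => by positivity, ← log_prod fun k _ => by positivity,
      ← Nat.cast_prod, ← Nat.cast_prod, prod_range_sigCount_succ]
  simp only [log_certainLikelihood hθ, sum_add_distrib, sum_sub_distrib,
    sum_range_comp_eq_sum_sigCount_smul X (fun k => log (θ k)), nsmul_eq_mul, hasc, hfac]

theorem tendsto_sum_log_certainLikelihood_div (hθ : ∀ k, 0 < θ k) {p : Fin K → ℝ} {x : Ω}
    (hp : ∀ k, Tendsto (fun t => (sigCount X k t x : ℝ) / t) atTop (𝓝 (p k))) :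
    Tendsto (fun t => (∑ s ∈ range t, log (certainLikelihood θ X s x)) / t) atTop
      (𝓝 (-KLdiv p θ)) := by
  have hK := (X 0 x).pos
  have hlik : Tendsto (fun t => ∑ k, (sigCount X k t x : ℝ) / t * log (θ k)) atTop
      (𝓝 (∑ k, p k * log (θ k))) :=
    tendsto_finsetSum _ fun k _ => (hp k).mul_const _
  have hmult := tendsto_log_multinomial_div (K - 1) (fun t => sum_sigCount X t x) hp
  have hconst := tendsto_const_div_atTop_nhds_zero_nat (log (K - 1)! : ℝ)
  have hlim := (hlik.add hmult).sub hconst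
  rw [← sub_eq_add_neg, sub_zero, ← neg_KLdiv_eq hθ] at hlim
  refine hlim.congr fun t => ?_
  have hasc : (K - 1)! * K.ascFactorial t = (K - 1 + t)! := by
    simpa [Nat.sub_add_cancel hK] using Nat.factorial_mul_ascFactorial (K - 1) t
  rw [sum_range_log_certainLikelihood hθ, ← hasc, Nat.cast_mul,
    log_mul (by positivity)
      (Nat.cast_ne_zero.2 (right_ne_zero_of_mul (hasc ▸ Nat.factorial_ne_zero _)))]
  simp only [add_div, sub_div, sum_div, div_mul_eq_mul_div]
  ring

variable [MeasurableSpace Ω]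

theorem identDistrib_of_measure_eq {P : Measure Ω} {Y Z : Ω → Fin K} (hY : Measurable Y)
    (hZ : Measurable Z) (h : ∀ k, P {x | Y x = k} = P {x | Z x = k}) : IdentDistrib Y Z P P :=
  ⟨hY.aemeasurable, hZ.aemeasurable, Measure.ext_of_singleton fun k => by
    rw [Measure.map_apply hY (measurableSet_singleton k),
      Measure.map_apply hZ (measurableSet_singleton k)]
    exact h k⟩

theorem ae_tendsto_sigCount_div {P : Measure Ω} [IsFiniteMeasure P] (hX : ∀ t, Measurable (X t))
    (hindep : Pairwise fun s t => IndepFun (X s) (X t) P)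
    (hident : ∀ t, IdentDistrib (X t) (X 0) P P) (k : Fin K) :
    ∀ᵐ x ∂P, Tendsto (fun t => (sigCount X k t x : ℝ) / t) atTop
      (𝓝 (P.real {x | X 0 x = k})) := by
  have hset : ∀ s, MeasurableSet {x | X s x = k} := fun s => hX s (measurableSet_singleton k)
  set Y : ℕ → Ω → ℝ := fun s => {x | X s x = k}.indicator 1
  set isK : Fin K → ℝ := fun a => if a = k then 1 else 0
  have hisK : Measurable isK := measurable_of_countable isK
  have hY : ∀ s, Y s = isK ∘ X s := fun s => by ext x; simp [Y, isK, Set.indicator_apply]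
  have hlaw := strong_law_ae_real Y ((integrable_const (1 : ℝ)).indicator (hset 0))
    (fun s t hst => by simpa only [Function.onFun, hY] using (hindep hst).comp hisK hisK)
    (fun s => by simpa only [hY] using (hident s).comp hisK)
  rw [integral_indicator_one (hset 0)] at hlaw
  filter_upwards [hlaw] with x hx
  refine hx.congr fun t => ?_
  simp [Y, sigCount, Set.indicator_apply, sum_boole]

theorem measurable_sigCount_comp (hX : ∀ t, Measurable (X t)) {Y : Ω → Fin K} (hY : Measurable Y)
    (t : ℕ) : Measurable fun x => sigCount X (Y x) t x := by
  simp only [sigCount, card_filter]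
  exact Finset.measurable_sum _ fun τ _ =>
    Measurable.ite (measurableSet_eq_fun (hX τ) hY) measurable_const measurable_const

theorem measurable_certainLikelihood (θ : Fin K → ℝ) (hX : ∀ t, Measurable (X t)) (t : ℕ) :
    Measurable (certainLikelihood θ X t) :=
  (((measurable_of_countable θ).comp (hX t)).mul_const _).div
    ((measurable_of_countable fun n : ℕ => ((n + 1 : ℕ) : ℝ)).comp
      (measurable_sigCount_comp hX (hX t) t))

end Signals

theorem tendsto_measure_lt_abs_sub_of_ae_tendsto {Ω : Type*} [MeasurableSpace Ω] {P : Measure Ω}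
    [IsFiniteMeasure P] {f : ℕ → Ω → ℝ} {c : ℝ} (hf : ∀ t, AEStronglyMeasurable (f t) P)
    (hlim : ∀ᵐ x ∂P, Tendsto (fun t => f t x) atTop (𝓝 c)) {ε : ℝ} (hε : 0 < ε) :
    Tendsto (fun t => P {x | ε < |f t x - c|}) atTop (𝓝 0) := by
  have := tendstoInMeasure_iff_dist.1 (tendstoInMeasure_of_tendsto_ae hf hlim) ε hε
  refine tendsto_of_tendsto_of_tendsto_of_le_of_le tendsto_const_nhds this (fun _ => zero_le)
    fun t => measure_mono fun x hx => ?_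
  change ε ≤ dist (f t x) c
  exact (Real.dist_eq _ _).symm ▸ le_of_lt hx


theorem tendsto_log_loglinear_certainLikelihood_div {Ω : Type*} {K : ℕ} {ι : Type*} [Fintype ι]
    [DecidableEq ι] {A : Matrix ι ι ℝ} (hA : A ∈ doublyStochastic ℝ ι)
    (hprim : ∃ N, 0 < N ∧ ∀ i j, 0 < (A ^ N) i j) {θ p : ι → Fin K → ℝ} (hθ : ∀ i k, 0 < θ i k)
    {X : ι → ℕ → Ω → Fin K} {x : Ω}
    (hp : ∀ i k, Tendsto (fun t => (sigCount (X i) k t x : ℝ) / t) atTop (𝓝 (p i k)))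
    {μ : ℕ → ι → ℝ} (hμ0 : ∀ i, μ 0 i = 1)
    (hμ : ∀ t i, μ (t + 1) i = certainLikelihood (θ i) (X i) t x * ∏ j, μ t j ^ A i j) (i : ι) :
    Tendsto (fun t => log (μ t i) / t) atTop
      (𝓝 ((∑ j, -KLdiv (p j) (θ j)) / Fintype.card ι)) := by
  have hK := (X i 0 x).pos
  obtain ⟨C, hC⟩ := Finite.bddAbove_range fun q : ι × Fin K => |log (θ q.1 q.2)|
  have hb_lim : Tendsto (fun t : ℕ => (C + log (K + t)) / t) atTop (𝓝 0) := by
    simpa [add_div] using (tendsto_const_div_atTop_nhds_zero_nat C).add (tendsto_log_add_div K)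
  exact tendsto_log_loglinear_div hA hprim (fun t j => certainLikelihood_pos (hθ j) t x) hμ0 hμ
    (fun s t hst => by gcongr)
    (fun t j => abs_log_certainLikelihood_le (hθ j) (fun k => hC ⟨(j, k), rfl⟩) t x) hb_lim
    (fun j => tendsto_sum_log_certainLikelihood_div (hθ j) (hp j)) i

theorem loglinear_certain_rate_general
    {Ω : Type*} [MeasurableSpace Ω] (P : Measure Ω) [IsProbabilityMeasure P]
    (m : ℕ) (K : ℕ)
    (A : Matrix (Fin m) (Fin m) ℝ)
    (hA_nonneg : ∀ i j, 0 ≤ A i j)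
    (hA_row : ∀ i, ∑ j, A i j = 1) (hA_col : ∀ j, ∑ i, A i j = 1)
    (hA_prim : ∃ N : ℕ, 1 ≤ N ∧ ∀ i j, 0 < (A ^ N) i j)
    (πstar πθ : Fin m → Fin K → ℝ)
    (hstar_pos : ∀ i k, 0 < πstar i k)
    (hθ_pos : ∀ i k, 0 < πθ i k)
    (X : Fin m → ℕ → Ω → Fin K) (hX_meas : ∀ i t, Measurable (X i t))
    (hX_indep : iIndepFun
      (fun p : Fin m × ℕ => X p.1 p.2) P)
    (hX_law : ∀ i t k, P {x | X i t x = k} = ENNReal.ofReal (πstar i k))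
    (μ : ℕ → Fin m → Ω → ℝ)
    (hμ0 : ∀ i x, μ 0 i x = 1)
    (hμ : ∀ t i x, μ (t + 1) i x =
      πθ i (X i t x) * (((t + 1 + K - 1 : ℕ)) : ℝ) /
          (((sigCount (X i) (X i t x) t x + 1 : ℕ)) : ℝ) *
        ∏ j, (μ t j x) ^ (A i j)) :
    ∀ i : Fin m, ∀ ε : ℝ, 0 < ε →
      Tendsto (fun t : ℕ =>
          P {x | ε < |(1 / (t : ℝ)) * Real.log (μ t i x) -
            (-((1 / (m : ℝ)) * ∑ j, KLdiv (πstar j) (πθ j)))|})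
        atTop (nhds 0) := by
  intro i ε hε
  have hA : A ∈ doublyStochastic ℝ (Fin m) :=
    mem_doublyStochastic_iff_sum.2 ⟨hA_nonneg, hA_row, hA_col⟩
  have hcounts : ∀ᵐ x ∂P, ∀ j k,
      Tendsto (fun t => (sigCount (X j) k t x : ℝ) / t) atTop (𝓝 (πstar j k)) := by
    refine ae_all_iff.2 fun j => ae_all_iff.2 fun k => ?_
    have := ae_tendsto_sigCount_div (hX_meas j)
      (fun s t hst => hX_indep.indepFun (by simpa using hst : (j, s) ≠ (j, t)))
      (fun t => identDistrib_of_measure_eq (hX_meas j t) (hX_meas j 0)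
        fun k => by rw [hX_law, hX_law]) k
    rwa [measureReal_def, hX_law, ENNReal.toReal_ofReal (hstar_pos j k).le] at this
  refine tendsto_measure_lt_abs_sub_of_ae_tendsto (fun t => ?_) ?_ hε
  · exact ((measurable_log.comp (measurable_loglinear
      (fun t j => measurable_certainLikelihood (πθ j) (hX_meas j) t) hμ0 hμ t i)).const_mul
        _).aestronglyMeasurable
  · filter_upwards [hcounts] with x hx
    convert tendsto_log_loglinear_certainLikelihood_div hA hA_prim hθ_pos hx
      (μ := fun t j => μ t j x) (hμ0 · x) (hμ · · x) i using 2 with t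
    · ring
    · rw [sum_neg_distrib, Fintype.card_fin]; ring

/-- With certain models and at least one mismatched agent, the log-linear beliefs
satisfy `(1/t) log μ_{it} → −(1/m) ∑ᵢ D_KL(π*_i ‖ π_{iθ})` in probability. -/
theorem loglinear_certain_rate
    {Ω : Type*} [MeasurableSpace Ω] (P : Measure Ω) [IsProbabilityMeasure P]
    (m : ℕ) (hm : 1 ≤ m) (K : ℕ) (hK : 2 ≤ K)
    (A : Matrix (Fin m) (Fin m) ℝ)
    (hA_nonneg : ∀ i j, 0 ≤ A i j)
    (hA_row : ∀ i, ∑ j, A i j = 1) (hA_col : ∀ j, ∑ i, A i j = 1)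
    (hA_prim : ∃ N : ℕ, 1 ≤ N ∧ ∀ i j, 0 < (A ^ N) i j)
    (πstar πθ : Fin m → Fin K → ℝ)
    (hstar_pos : ∀ i k, 0 < πstar i k) (hstar_sum : ∀ i, ∑ k, πstar i k = 1)
    (hθ_pos : ∀ i k, 0 < πθ i k) (hθ_sum : ∀ i, ∑ k, πθ i k = 1)
    (X : Fin m → ℕ → Ω → Fin K) (hX_meas : ∀ i t, Measurable (X i t))
    (hX_indep : iIndepFun
      (fun p : Fin m × ℕ => X p.1 p.2) P)
    (hX_law : ∀ i t k, P {x | X i t x = k} = ENNReal.ofReal (πstar i k))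
    (μ : ℕ → Fin m → Ω → ℝ)
    (hμ0 : ∀ i x, μ 0 i x = 1)
    (hμ : ∀ t i x, μ (t + 1) i x =
      πθ i (X i t x) * (((t + 1 + K - 1 : ℕ)) : ℝ) /
          (((sigCount (X i) (X i t x) t x + 1 : ℕ)) : ℝ) *
        ∏ j, (μ t j x) ^ (A i j))
    (hmismatch : ∃ i, πθ i ≠ πstar i) :
    ∀ i : Fin m, ∀ ε : ℝ, 0 < ε →
      Tendsto (fun t : ℕ =>
          P {x | ε < |(1 / (t : ℝ)) * Real.log (μ t i x) -
            (-((1 / (m : ℝ)) * ∑ j, KLdiv (πstar j) (πθ j)))|})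
        atTop (nhds 0) :=
  loglinear_certain_rate_general P m K A hA_nonneg hA_row hA_col hA_prim πstar πθ hstar_pos hθ_pos X
    hX_meas hX_indep hX_law μ hμ0 hμ
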